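/- Let Γ = ⟨α_1, …, α_k⟩ ⊂ ℕ^d be an affine semigroup and fix i ≤ k. Then t_i(Γ) = sup{ t_i(γ) : γ ∈ M_i }, where M_i = { φ_Γ(x) : x ∈ Minimals_≤ Z_Γ(α_i + Γ) } and the minimal elements are taken with respect to the componentwise order on ℕ^k. -/
import Mathlib


open Finset

/-- The factorization homomorphism `φ_Γ : ℕ^k → ℕ^d` determined by the
generators `α 1, …, α k`. -/
def phi {d k : ℕ} (α : Fin k → Fin d → ℕ) (z : Fin k → ℕ) : Fin d → ℕ :=
  ∑ i, z i • α i

/-- The length `|z|` of a factorization. -/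
def len {k : ℕ} (z : Fin k → ℕ) : ℕ := ∑ i, z i

/-- The greatest common divisor `gcd(z,w)` of two factorizations. -/
def gcdF {k : ℕ} (z w : Fin k → ℕ) : Fin k → ℕ := fun i => min (z i) (w i)

/-- The distance `dist(z,w) = max(|z − gcd(z,w)|, |w − gcd(z,w)|)`. -/
def distF {k : ℕ} (z w : Fin k → ℕ) : ℕ :=
  max (len (z - gcdF z w)) (len (w - gcdF z w))

/-- The principal ideal `α_i + Γ` of the affine semigroup `Γ`. -/
def idealOf {d k : ℕ} (α : Fin k → Fin d → ℕ) (i : Fin k) : Set (Fin d → ℕ) :=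
  {γ | ∃ x : Fin k → ℕ, γ = α i + phi α x}

/-- The tame degree `t_i(γ) ∈ ℕ ∪ {∞}`: the least `N` such that every
factorization `z` of `γ` is within distance `N` of a factorization `w` of `γ`
with `w i > 0`. -/
noncomputable def tameDeg {d k : ℕ} (α : Fin k → Fin d → ℕ) (i : Fin k)
    (γ : Fin d → ℕ) : ℕ∞ :=
  sInf {N : ℕ∞ | ∀ z : Fin k → ℕ, phi α z = γ →
    ∃ w : Fin k → ℕ, phi α w = γ ∧ 0 < w i ∧ (distF z w : ℕ∞) ≤ N}

/-- `Z_Γ(α_i + Γ)`, the set of factorizations of elements of `α_i + Γ`. -/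
def ZIdeal {d k : ℕ} (α : Fin k → Fin d → ℕ) (i : Fin k) : Set (Fin k → ℕ) :=
  {z | phi α z ∈ idealOf α i}

lemma phi_add {d k : ℕ} (α : Fin k → Fin d → ℕ) (a b : Fin k → ℕ) :
    phi α (a + b) = phi α a + phi α b := by
  simp [phi, add_smul, Finset.sum_add_distrib]

lemma phi_indicator {d k : ℕ} (α : Fin k → Fin d → ℕ) (i : Fin k) :
    phi α (fun j => if j = i then 1 else 0) = α i := by
  simp [phi, ite_smul, Finset.sum_ite_eq']

lemma len_lt_of_lt {k : ℕ} {a b : Fin k → ℕ} (h : a ≤ b) (hne : a ≠ b) :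
    len a < len b := by
  obtain ⟨j, hj⟩ : ∃ j, a j ≠ b j := by
    by_contra hc
    push_neg at hc
    exact hne (funext hc)
  exact Finset.sum_lt_sum (fun m _ => h m) ⟨j, Finset.mem_univ j, lt_of_le_of_ne (h j) hj⟩

lemma exists_minimal {d k : ℕ} (α : Fin k → Fin d → ℕ) (i : Fin k) (z : Fin k → ℕ)
    (hz : z ∈ ZIdeal α i) :
    ∃ z' ∈ ZIdeal α i, z' ≤ z ∧ ∀ w ∈ ZIdeal α i, w ≤ z' → w = z' := by
  obtain ⟨n, hn⟩ : ∃ n, len z = n := ⟨_, rfl⟩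
  induction n using Nat.strong_induction_on generalizing z with
  | _ n ih =>
    by_cases hm : ∀ w ∈ ZIdeal α i, w ≤ z → w = z
    · exact ⟨z, hz, le_refl z, hm⟩
    · push_neg at hm
      obtain ⟨w, hw, hwz, hne⟩ := hm
      obtain ⟨z', hz', hle, hminz⟩ := ih (len w) (hn ▸ len_lt_of_lt hwz hne) w hw rfl
      exact ⟨z', hz', le_trans hle hwz, hminz⟩

lemma distF_add {k : ℕ} (z w c : Fin k → ℕ) : distF (z + c) (w + c) = distF z w := by
  have hg : gcdF (z + c) (w + c) = gcdF z w + c := by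
    funext j
    simp only [gcdF, Pi.add_apply]
    omega
  have h1 : (z + c) - gcdF (z + c) (w + c) = z - gcdF z w := by
    rw [hg]; funext j
    simp [gcdF, Pi.sub_apply]
    omega
  have h2 : (w + c) - gcdF (z + c) (w + c) = w - gcdF z w := by
    rw [hg]; funext j
    simp [gcdF, Pi.sub_apply]
    omega
  rw [distF, h1, h2, distF]

lemma tame_set_nonempty {d k : ℕ} (α : Fin k → Fin d → ℕ) (i : Fin k) {γ : Fin d → ℕ}
    (hγ : γ ∈ idealOf α i) :
    ({N : ℕ∞ | ∀ z : Fin k → ℕ, phi α z = γ →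
      ∃ w : Fin k → ℕ, phi α w = γ ∧ 0 < w i ∧ (distF z w : ℕ∞) ≤ N}).Nonempty := by
  obtain ⟨x, hx⟩ := hγ
  refine ⟨⊤, fun z hz => ⟨x + (fun j => if j = i then 1 else 0), ?_, ?_, le_top⟩⟩
  · rw [phi_add, phi_indicator, hx, add_comm]
  · simp


/-- `t_i(Γ) = sup{ t_i(γ) : γ ∈ M_i }`, where
`M_i = φ_Γ(Minimals_≤ Z_Γ(α_i + Γ))`. -/
theorem stmt11 {d k : ℕ} (α : Fin k → Fin d → ℕ)
    (hne : ∀ i, α i ≠ 0)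
    (hmin : ∀ i, α i ∉ AddSubmonoid.closure (α '' {j | j ≠ i}))
    (i : Fin k) :
    (⨆ γ ∈ idealOf α i, tameDeg α i γ) =
      ⨆ γ ∈ phi α ''
          {z ∈ ZIdeal α i | ∀ w ∈ ZIdeal α i, w ≤ z → w = z},
        tameDeg α i γ := by
  apply le_antisymm
  · -- main direction
    refine iSup₂_le fun γ hγ => ?_
    set S := ⨆ γ ∈ phi α '' {z ∈ ZIdeal α i | ∀ w ∈ ZIdeal α i, w ≤ z → w = z},
        tameDeg α i γ with hS
    refine sInf_le fun z hz => ?_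
    have hzI : z ∈ ZIdeal α i := by rw [ZIdeal, Set.mem_setOf_eq, hz]; exact hγ
    obtain ⟨z', hz'I, hle, hminz⟩ := exists_minimal α i z hzI
    have hγ'M : phi α z' ∈ phi α '' {z ∈ ZIdeal α i | ∀ w ∈ ZIdeal α i, w ≤ z → w = z} :=
      ⟨z', ⟨hz'I, hminz⟩, rfl⟩
    have htS : tameDeg α i (phi α z') ≤ S := le_iSup₂_of_le (phi α z') hγ'M le_rfl
    have hmem : tameDeg α i (phi α z') ∈ {N : ℕ∞ | ∀ z : Fin k → ℕ, phi α z = phi α z' →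
        ∃ w : Fin k → ℕ, phi α w = phi α z' ∧ 0 < w i ∧ (distF z w : ℕ∞) ≤ N} :=
      csInf_mem (tame_set_nonempty α i hz'I)
    obtain ⟨w', hw', hw'i, hdist⟩ := hmem z' rfl
    obtain ⟨c, hzc⟩ : ∃ c, z = z' + c := by
      refine ⟨z - z', funext fun j => ?_⟩
      have := Pi.le_def.mp hle j
      simp only [Pi.add_apply, Pi.sub_apply]
      omega
    refine ⟨w' + c, ?_, ?_, ?_⟩
    · rw [phi_add, hw', ← phi_add, ← hzc, hz]
    · exact lt_of_lt_of_le hw'i (by simp : w' i ≤ (w' + c) i)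
    · rw [hzc, distF_add]
      exact le_trans hdist htS
  · refine iSup₂_le fun γ hγ => ?_
    obtain ⟨z, ⟨hzI, -⟩, rfl⟩ := hγ
    exact le_iSup₂_of_le (phi α z) hzI le_rfl
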